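/- There exist countably many sets A_m ⊆ 2^ω (m ∈ ℕ) with ⋃_{m∈ℕ} A_m = 2^ω and, for each m, a perfect set P_m ⊆ 2^ω such that the translates A_m + x, x ∈ P_m, are pairwise disjoint. In other words, 2^ω belongs to the σ-ideal I₀* generated by the family F₀* of all (not necessarily Borel) sets A ⊆ 2^ω for which some perfect set P ⊆ 2^ω makes the family {A + x : x ∈ P} disjoint; hence I₀* is not a proper ideal. -/

import Mathlib

open Set

/-- The Cantor group `2^ω`: functions `ℕ → ZMod 2` with the product topology and
coordinatewise addition modulo 2. -/
abbrev CantorSp : Type := ℕ → ZMod 2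

/-- The translate `A + x` of a set `A ⊆ 2^ω` by `x ∈ 2^ω`. -/
def cTranslate (A : Set CantorSp) (x : CantorSp) : Set CantorSp := (fun a => a + x) '' A

/-!
Let `(C k)` enumerate the cylinders of `2^ω` and `φ x = (𝟙_{C k} x)_k`. Since every point can be
separated from any finite set by a cylinder, `φ` is a continuous injection with linearly independent
range, so `φ '' C k` is perfect. Extend the coordinate functionals of this independent family to a
linear map `f : 2^ω → (2^ω →₀ ZMod 2)`. If `a + φ p = b + φ q` with `p ≠ q`, the `p`-coordinates give
`f a p + 1 = f b p`; hence the translates of `A` by `φ '' P` are pairwise disjoint as soon as `f a`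
vanishes on `P` for every `a ∈ A`. As `f z` has finite support, which misses some cylinder, the sets
`A_k = {z | f z = 0 on C k}` cover `2^ω`, with `P_k = φ '' C k`.
-/

open Function PiNat

namespace PiNat

variable {α : Type*}

theorem countable_setOf_cylinder [Countable α] :
    {s : Set (ℕ → α) | ∃ x n, s = cylinder x n}.Countable := by
  refine (countable_range fun w : List α => {y | res y w.length = w}).mono ?_
  rintro _ ⟨x, n, rfl⟩
  exact ⟨res x n, by simp only [res_length, cylinder_eq_res]⟩

variable [TopologicalSpace α] [DiscreteTopology α]

theorem isClosed_cylinder (x : ℕ → α) (n : ℕ) : IsClosed (cylinder x n) := by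
  rw [cylinder_eq_pi]
  exact isClosed_set_pi fun i _ => isClosed_discrete _

theorem isClopen_cylinder (x : ℕ → α) (n : ℕ) : IsClopen (cylinder x n) :=
  ⟨isClosed_cylinder x n, isOpen_cylinder _ x n⟩

instance perfectSpace [Nontrivial α] : PerfectSpace (ℕ → α) := by
  refine ⟨preperfect_iff_nhds.2 fun x _ U hU => ?_⟩
  obtain ⟨_, ⟨y, n, rfl⟩, hxy, hyU⟩ := (isTopologicalBasis_cylinders _).mem_nhds_iff.1 hU
  rw [← mem_cylinder_iff_eq.1 hxy] at hyU
  obtain ⟨b, hb⟩ := exists_ne (x n)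
  exact ⟨update x n b, ⟨hyU (update_mem_cylinder x n b), trivial⟩,
    fun h => hb (by simpa using congrFun h n)⟩

theorem perfect_cylinder [Nontrivial α] (x : ℕ → α) (n : ℕ) : Perfect (cylinder x n) :=
  ⟨isClosed_cylinder x n, (isOpen_cylinder _ x n).preperfect⟩

theorem exists_cylinder_disjoint_finset {F : Finset (ℕ → α)} {x : ℕ → α} (hx : x ∉ F) :
    ∃ n, Disjoint (cylinder x n) F := by
  obtain ⟨n, hn⟩ := exists_disjoint_cylinder F.finite_toSet.isClosed hx
  exact ⟨n, hn.symm⟩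

end PiNat

section IndicatorEmbedding

variable {X κ R : Type*} {C : κ → Set X}

theorem linearIndependent_indicator_one [Ring R]
    (hC : ∀ (F : Finset X) x, x ∉ F → ∃ k, x ∈ C k ∧ Disjoint (C k) F) :
    LinearIndependent R fun x k => (C k).indicator (1 : X → R) x := by
  classical
  rw [linearIndependent_iff']
  intro s g hg x hx
  obtain ⟨k, hxk, hdisj⟩ := hC (s.erase x) x (s.notMem_erase x)
  have hk := congrFun hg k
  simp only [Finset.sum_apply, Pi.smul_apply, smul_eq_mul, Pi.zero_apply] at hk
  rwa [Finset.sum_eq_single_of_mem x hx fun y hy hyx => by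
    rw [indicator_of_notMem (hdisj.notMem_of_mem_right (Finset.mem_erase.2 ⟨hyx, hy⟩)),
      mul_zero], indicator_of_mem hxk, Pi.one_apply, mul_one] at hk

theorem continuous_indicator_one [TopologicalSpace X] [TopologicalSpace R] [Zero R] [One R]
    (hC : ∀ k, IsClopen (C k)) : Continuous fun x k => (C k).indicator (1 : X → R) x :=
  continuous_pi fun k => continuous_const.indicator (by simp [(hC k).frontier_eq])

end IndicatorEmbedding

section Perfect

variable {X Y : Type*} [TopologicalSpace X] [TopologicalSpace Y] {C : Set X} {f : X → Y}

theorem Preperfect.image (hC : Preperfect C) (hf : Continuous f) (hinj : InjOn f C) :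
    Preperfect (f '' C) := by
  rw [preperfect_iff_nhds] at hC ⊢
  rintro _ ⟨x, hx, rfl⟩ U hU
  obtain ⟨y, ⟨hyU, hyC⟩, hyx⟩ := hC x hx _ (hf.continuousAt.preimage_mem_nhds hU)
  exact ⟨f y, ⟨hyU, mem_image_of_mem f hyC⟩, fun h => hyx (hinj hyC hx h)⟩

theorem Perfect.image [CompactSpace X] [T2Space Y] (hC : Perfect C) (hf : Continuous f)
    (hinj : InjOn f C) : Perfect (f '' C) :=
  ⟨(hC.closed.isCompact.image hf).isClosed, hC.acc.image hf hinj⟩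

end Perfect

theorem LinearIndependent.exists_linearMap_eq_single {ι K V : Type*} [DivisionRing K]
    [AddCommGroup V] [Module K V] {v : ι → V} (hv : LinearIndependent K v) :
    ∃ f : V →ₗ[K] ι →₀ K, ∀ i, f (v i) = Finsupp.single i 1 := by
  obtain ⟨f, hf⟩ := LinearMap.exists_extend hv.repr
  refine ⟨f, fun i => ?_⟩
  have := LinearMap.congr_fun hf ⟨v i, Submodule.subset_span (mem_range_self i)⟩
  rw [LinearMap.comp_apply, Submodule.subtype_apply] at this
  rw [this, hv.repr_eq_single i _ rfl]

theorem pairwise_disjoint_translates_of_forall_coord_eq_zero {ι R V : Type*} [Semiring R]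
    [Nontrivial R] [AddCommMonoid V] [Module R V] {v : ι → V} (f : V →ₗ[R] ι →₀ R)
    (hf : ∀ i, f (v i) = Finsupp.single i 1) {A : Set V} {P : Set ι}
    (hA : ∀ a ∈ A, ∀ p ∈ P, f a p = 0) :
    (v '' P).Pairwise fun x y => Disjoint ((· + x) '' A) ((· + y) '' A) := by
  rintro _ ⟨p, hp, rfl⟩ _ ⟨q, -, rfl⟩ hne
  rw [disjoint_left]
  rintro _ ⟨a, ha, rfl⟩ ⟨b, hb, hab⟩
  have hpq : p ≠ q := by rintro rfl; exact hne rfl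
  have := congrArg (fun z => f z p) hab
  simp only [map_add, Finsupp.add_apply, hf, hA a ha p hp, hA b hb p hp,
    Finsupp.single_eq_same, Finsupp.single_eq_of_ne hpq] at this
  simp at this

/-- `2^ω` is a countable union of sets `A_m` each of which admits a perfect set `P_m`
of translations making `{A_m + x : x ∈ P_m}` pairwise disjoint; i.e. `2^ω` belongs to
the σ-ideal `I₀*` generated by the family `F₀*`, so `I₀*` is not proper. -/
theorem stmt6 :
    ∃ A : ℕ → Set CantorSp, (⋃ m, A m) = Set.univ ∧
      ∀ m : ℕ, ∃ P : Set CantorSp, Perfect P ∧ P.Nonempty ∧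
        P.Pairwise fun x y => Disjoint (cTranslate (A m) x) (cTranslate (A m) y) := by
  obtain ⟨C, hC⟩ := countable_setOf_cylinder.exists_eq_range ⟨_, (0 : CantorSp), 0, rfl⟩
  have hCyl : ∀ k, ∃ x n, C k = cylinder x n := fun k => hC.symm.subset (mem_range_self k)
  have hsep : ∀ (F : Finset CantorSp) x, x ∉ F → ∃ k, x ∈ C k ∧ Disjoint (C k) F := by
    intro F x hx
    obtain ⟨n, hn⟩ := exists_cylinder_disjoint_finset hx
    obtain ⟨k, hk⟩ : cylinder x n ∈ range C := hC ▸ ⟨x, n, rfl⟩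
    exact ⟨k, hk ▸ self_mem_cylinder x n, hk ▸ hn⟩
  set φ : CantorSp → CantorSp := fun x k => (C k).indicator 1 x
  have hφ : LinearIndependent (ZMod 2) φ := linearIndependent_indicator_one hsep
  have hφc : Continuous φ := continuous_indicator_one fun k => by
    obtain ⟨x, n, hk⟩ := hCyl k
    exact hk ▸ isClopen_cylinder x n
  obtain ⟨f, hf⟩ := hφ.exists_linearMap_eq_single
  refine ⟨fun k => {z | ∀ p ∈ C k, f z p = 0}, eq_univ_of_forall fun z => ?_, fun k => ?_⟩
  · obtain ⟨x, hx⟩ := (f z).support.exists_notMem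
    obtain ⟨k, -, hk⟩ := hsep _ x hx
    exact mem_iUnion.2 ⟨k, fun p hp => Finsupp.notMem_support_iff.1 (hk.notMem_of_mem_left hp)⟩
  · obtain ⟨x, n, hk⟩ := hCyl k
    refine ⟨φ '' C k, ?_, ⟨φ x, mem_image_of_mem φ (hk ▸ self_mem_cylinder x n)⟩,
      pairwise_disjoint_translates_of_forall_coord_eq_zero f hf fun _ ha => ha⟩
    exact hk ▸ (perfect_cylinder x n).image hφc hφ.injective.injOn
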